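/- arXiv:2605.09849 — 4 statements merged into one kernel-verified Lean document; each statement's English description precedes it below -/
import Mathlib

section
/- (Verification of the weight property, Assumption 8, for the binary example.) Let (Ω, F, P) be a probability space and let B_0, B_1 ∈ F be disjoint events of positive probability (the events {Y = y_0, A = a, C = c} and {Y = y_1, A = a, C = c}). Suppose that for each k ∈ {0,1}, under the conditional probability measure P[· | B_k] the random variables W, Z, V : Ω → ℝ are mutually independent and integrable with conditional means E[W | B_k] = μWk, E[Z | B_k] = μZk, E[V | B_k] = μVk. Then for each i ∈ {0,1} with j = 1 − i: E[g_i(W, Z, V) | B_i] = 1 and E[g_i(W, Z, V) | B_j] = 0. -/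
open MeasureTheory ProbabilityTheory

/-- The binary proxy weight `g_i(w,z,v)` from the paper's Equation (4). -/
noncomputable def binaryProxyWeight (μW μZ μV : Fin 2 → ℝ) (i : Fin 2) (w z v : ℝ) : ℝ :=
  let j : Fin 2 := 1 - i
  (w - μW j) * (z - μZ j) / ((μW i - μW j) * (μZ i - μZ j))
  + (z - μZ j) * (v - μV j) / ((μZ i - μZ j) * (μV i - μV j))
  + (w - μW j) * (v - μV j) / ((μW i - μW j) * (μV i - μV j))
  - 2 * ((w - μW j) * (z - μZ j) * (v - μV j)) /
      ((μW i - μW j) * (μZ i - μZ j) * (μV i - μV j))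

/-- `iIndepFun` is stable under a.e. modification of the functions. -/
lemma iIndepFun_congr_ae' {Ω ι : Type*} [MeasurableSpace Ω] {μ : Measure Ω}
    {β : ι → Type*} [m : ∀ i, MeasurableSpace (β i)] {f g : ∀ i, Ω → β i}
    (hf : iIndepFun f μ) (h : ∀ i, f i =ᵐ[μ] g i) : iIndepFun g μ := by
  rw [iIndepFun_iff_measure_inter_preimage_eq_mul] at hf ⊢
  intro S sets H
  have hpre : ∀ i, g i ⁻¹' sets i =ᵐ[μ] f i ⁻¹' sets i := by
    intro i
    filter_upwards [h i] with ω hω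
    show (ω ∈ g i ⁻¹' sets i) = (ω ∈ f i ⁻¹' sets i)
    rw [Set.mem_preimage, Set.mem_preimage, hω]
  have hint : (⋂ i ∈ S, g i ⁻¹' sets i) =ᵐ[μ] (⋂ i ∈ S, f i ⁻¹' sets i) := by
    have hall : ∀ᵐ ω ∂μ, ∀ i ∈ S, ((ω ∈ g i ⁻¹' sets i) = (ω ∈ f i ⁻¹' sets i)) :=
      (ae_ball_iff S.countable_toSet).2 fun i _ => hpre i
    filter_upwards [hall] with ω hω
    show (ω ∈ ⋂ i ∈ S, g i ⁻¹' sets i) = (ω ∈ ⋂ i ∈ S, f i ⁻¹' sets i)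
    simp only [Set.mem_iInter]
    exact propext (forall₂_congr fun i hi => iff_of_eq (hω i hi))
  rw [measure_congr hint, hf S H]
  exact Finset.prod_congr rfl fun i _ => (measure_congr (hpre i)).symm

/-- Key computation: for independent integrable `W, Z, V` under a probability measure,
the integral of the binary proxy weight equals the weight evaluated at the means. -/
lemma integral_binaryProxyWeight_eq {Ω : Type*} [MeasurableSpace Ω] (μ : Measure Ω)
    [IsProbabilityMeasure μ] (μW μZ μV : Fin 2 → ℝ) (i : Fin 2) (W Z V : Ω → ℝ)
    (hindep : iIndepFun ![W, Z, V] μ)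
    (hWint : Integrable W μ) (hZint : Integrable Z μ) (hVint : Integrable V μ) :
    ∫ ω, binaryProxyWeight μW μZ μV i (W ω) (Z ω) (V ω) ∂μ =
      binaryProxyWeight μW μZ μV i (∫ ω, W ω ∂μ) (∫ ω, Z ω ∂μ) (∫ ω, V ω ∂μ) := by
  classical
  -- measurable representatives
  set W' : Ω → ℝ := hWint.1.mk W with hW'def
  set Z' : Ω → ℝ := hZint.1.mk Z with hZ'def
  set V' : Ω → ℝ := hVint.1.mk V with hV'def
  have hWW' : W =ᵐ[μ] W' := hWint.1.ae_eq_mk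
  have hZZ' : Z =ᵐ[μ] Z' := hZint.1.ae_eq_mk
  have hVV' : V =ᵐ[μ] V' := hVint.1.ae_eq_mk
  have hW'm : Measurable W' := hWint.1.measurable_mk
  have hZ'm : Measurable Z' := hZint.1.measurable_mk
  have hV'm : Measurable V' := hVint.1.measurable_mk
  have hW'int : Integrable W' μ := hWint.congr hWW'
  have hZ'int : Integrable Z' μ := hZint.congr hZZ'
  have hV'int : Integrable V' μ := hVint.congr hVV'
  have hindep' : iIndepFun ![W', Z', V'] μ := by
    refine iIndepFun_congr_ae' hindep fun k => ?_
    fin_cases k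
    · simpa using hWW'
    · simpa using hZZ'
    · simpa using hVV'
  -- centered variables
  set j : Fin 2 := 1 - i with hj
  set X : Ω → ℝ := fun ω => W' ω - μW j with hXdef
  set Y : Ω → ℝ := fun ω => Z' ω - μZ j with hYdef
  set U : Ω → ℝ := fun ω => V' ω - μV j with hUdef
  have hXm : Measurable X := hW'm.sub measurable_const
  have hYm : Measurable Y := hZ'm.sub measurable_const
  have hUm : Measurable U := hV'm.sub measurable_const
  have hXint : Integrable X μ := hW'int.sub (integrable_const _)
  have hYint : Integrable Y μ := hZ'int.sub (integrable_const _)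
  have hUint : Integrable U μ := hV'int.sub (integrable_const _)
  have hindepXYU : iIndepFun ![X, Y, U] μ := by
    have hcomp := hindep'.comp
      (g := ![fun x => x - μW j, fun x => x - μZ j, fun x => x - μV j])
      (fun k => by fin_cases k <;> exact measurable_id.sub_const _)
    have heq : (fun k => ![fun x => x - μW j, fun x => x - μZ j, fun x => x - μV j] k
        ∘ ![W', Z', V'] k) = ![X, Y, U] := by
      funext k ω
      fin_cases k <;> rfl
    rwa [heq] at hcomp
  have hmeasXYU : ∀ k : Fin 3, Measurable (![X, Y, U] k) := by
    intro k; fin_cases k <;> assumption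
  -- independence of pairs and of (X*Y) with U
  have indepXY : IndepFun X Y μ := hindepXYU.indepFun (show (0 : Fin 3) ≠ 1 by decide)
  have indepYU : IndepFun Y U μ := hindepXYU.indepFun (show (1 : Fin 3) ≠ 2 by decide)
  have indepXU : IndepFun X U μ := hindepXYU.indepFun (show (0 : Fin 3) ≠ 2 by decide)
  have indepXY_U : IndepFun (X * Y) U μ :=
    hindepXYU.indepFun_mul_left hmeasXYU 0 1 2 (by decide) (by decide)
  -- integrability of products
  have hXY : Integrable (X * Y) μ := indepXY.integrable_mul hXint hYint
  have hYU : Integrable (Y * U) μ := indepYU.integrable_mul hYint hUint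
  have hXU : Integrable (X * U) μ := indepXU.integrable_mul hXint hUint
  have hXYU : Integrable (X * Y * U) μ := indepXY_U.integrable_mul hXY hUint
  -- product formulas
  have intXY : ∫ ω, X ω * Y ω ∂μ = (∫ ω, X ω ∂μ) * ∫ ω, Y ω ∂μ :=
    indepXY.integral_fun_mul_eq_mul_integral hXint.1 hYint.1
  have intYU : ∫ ω, Y ω * U ω ∂μ = (∫ ω, Y ω ∂μ) * ∫ ω, U ω ∂μ :=
    indepYU.integral_fun_mul_eq_mul_integral hYint.1 hUint.1
  have intXU : ∫ ω, X ω * U ω ∂μ = (∫ ω, X ω ∂μ) * ∫ ω, U ω ∂μ :=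
    indepXU.integral_fun_mul_eq_mul_integral hXint.1 hUint.1
  have intXYU : ∫ ω, X ω * Y ω * U ω ∂μ = (∫ ω, X ω * Y ω ∂μ) * ∫ ω, U ω ∂μ :=
    indepXY_U.integral_fun_mul_eq_mul_integral hXY.1 hUint.1
  -- means of centered variables
  have mX : ∫ ω, X ω ∂μ = (∫ ω, W ω ∂μ) - μW j := by
    rw [show (∫ ω, X ω ∂μ) = ∫ ω, W' ω - μW j ∂μ from rfl,
      integral_sub hW'int (integrable_const _), integral_const,
      integral_congr_ae hWW'.symm]
    simp
  have mY : ∫ ω, Y ω ∂μ = (∫ ω, Z ω ∂μ) - μZ j := by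
    rw [show (∫ ω, Y ω ∂μ) = ∫ ω, Z' ω - μZ j ∂μ from rfl,
      integral_sub hZ'int (integrable_const _), integral_const,
      integral_congr_ae hZZ'.symm]
    simp
  have mU : ∫ ω, U ω ∂μ = (∫ ω, V ω ∂μ) - μV j := by
    rw [show (∫ ω, U ω ∂μ) = ∫ ω, V' ω - μV j ∂μ from rfl,
      integral_sub hV'int (integrable_const _), integral_const,
      integral_congr_ae hVV'.symm]
    simp
  -- rewrite the integrand a.e. in terms of X, Y, U
  have hcongr : ∫ ω, binaryProxyWeight μW μZ μV i (W ω) (Z ω) (V ω) ∂μ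
      = ∫ ω, X ω * Y ω / ((μW i - μW j) * (μZ i - μZ j))
          + Y ω * U ω / ((μZ i - μZ j) * (μV i - μV j))
          + X ω * U ω / ((μW i - μW j) * (μV i - μV j))
          - 2 * (X ω * Y ω * U ω) /
              ((μW i - μW j) * (μZ i - μZ j) * (μV i - μV j)) ∂μ := by
    refine integral_congr_ae ?_
    filter_upwards [hWW', hZZ', hVV'] with ω h1 h2 h3
    simp only [binaryProxyWeight, hXdef, hYdef, hUdef, ← hj, h1, h2, h3]
  -- integrability of the summands in lambda form
  have I1 : Integrable (fun ω => X ω * Y ω / ((μW i - μW j) * (μZ i - μZ j))) μ :=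
    hXY.div_const _
  have I2 : Integrable (fun ω => Y ω * U ω / ((μZ i - μZ j) * (μV i - μV j))) μ :=
    hYU.div_const _
  have I3 : Integrable (fun ω => X ω * U ω / ((μW i - μW j) * (μV i - μV j))) μ :=
    hXU.div_const _
  have I4 : Integrable (fun ω => 2 * (X ω * Y ω * U ω) /
      ((μW i - μW j) * (μZ i - μZ j) * (μV i - μV j))) μ :=
    (hXYU.const_mul 2).div_const _
  have I12 : Integrable (fun ω => X ω * Y ω / ((μW i - μW j) * (μZ i - μZ j))
      + Y ω * U ω / ((μZ i - μZ j) * (μV i - μV j))) μ := I1.add I2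
  have I123 : Integrable (fun ω => X ω * Y ω / ((μW i - μW j) * (μZ i - μZ j))
      + Y ω * U ω / ((μZ i - μZ j) * (μV i - μV j))
      + X ω * U ω / ((μW i - μW j) * (μV i - μV j))) μ := I12.add I3
  rw [hcongr, integral_sub I123 I4, integral_add I12 I3,
    integral_add I1 I2, integral_div, integral_div, integral_div, integral_div,
    integral_const_mul, intXYU, intXY, intYU, intXU, mX, mY, mU]
  simp only [binaryProxyWeight, ← hj]

/-- verification of the weight property (Assumption 8) for the binary
example: conditionally on `B i` the weight `g_i(W,Z,V)` has mean one, and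
conditionally on `B (1-i)` it has mean zero. -/
theorem condExp_binaryProxyWeight
    {Ω : Type*} [MeasurableSpace Ω] (P : Measure Ω) [IsProbabilityMeasure P]
    (μW μZ μV : Fin 2 → ℝ)
    (hW : μW 0 ≠ μW 1) (hZ : μZ 0 ≠ μZ 1) (hV : μV 0 ≠ μV 1)
    (W Z V : Ω → ℝ) (B : Fin 2 → Set Ω)
    (hBmeas : ∀ k, MeasurableSet (B k))
    (hBdisj : Disjoint (B 0) (B 1))
    (hBpos : ∀ k, 0 < P (B k))
    (hindep : ∀ k, iIndepFun ![W, Z, V] (P[|B k]))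
    (hWint : ∀ k, Integrable W (P[|B k]))
    (hZint : ∀ k, Integrable Z (P[|B k]))
    (hVint : ∀ k, Integrable V (P[|B k]))
    (hWmean : ∀ k, ∫ ω, W ω ∂(P[|B k]) = μW k)
    (hZmean : ∀ k, ∫ ω, Z ω ∂(P[|B k]) = μZ k)
    (hVmean : ∀ k, ∫ ω, V ω ∂(P[|B k]) = μV k)
    (i : Fin 2) :
    ∫ ω, binaryProxyWeight μW μZ μV i (W ω) (Z ω) (V ω) ∂(P[|B i]) = 1 ∧
    ∫ ω, binaryProxyWeight μW μZ μV i (W ω) (Z ω) (V ω) ∂(P[|B (1 - i)]) = 0 := by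
  have hprob : ∀ k, IsProbabilityMeasure (P[|B k]) := fun k =>
    cond_isProbabilityMeasure (hBpos k).ne'
  have key : ∀ k, ∫ ω, binaryProxyWeight μW μZ μV i (W ω) (Z ω) (V ω) ∂(P[|B k])
      = binaryProxyWeight μW μZ μV i (μW k) (μZ k) (μV k) := by
    intro k
    have := hprob k
    rw [integral_binaryProxyWeight_eq (P[|B k]) μW μZ μV i W Z V (hindep k)
      (hWint k) (hZint k) (hVint k), hWmean k, hZmean k, hVmean k]
  have haW : μW i - μW (1 - i) ≠ 0 := by
    fin_cases i
    · simpa [sub_ne_zero] using hW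
    · simpa [sub_ne_zero] using hW.symm
  have haZ : μZ i - μZ (1 - i) ≠ 0 := by
    fin_cases i
    · simpa [sub_ne_zero] using hZ
    · simpa [sub_ne_zero] using hZ.symm
  have haV : μV i - μV (1 - i) ≠ 0 := by
    fin_cases i
    · simpa [sub_ne_zero] using hV
    · simpa [sub_ne_zero] using hV.symm
  constructor
  · rw [key i]
    simp only [binaryProxyWeight]
    field_simp
    ring
  · rw [key (1 - i)]
    simp [binaryProxyWeight, sub_self]
end

section
/- (Theorem 2, mean-zero property of the observed-data influence function.) Let (Ω, F, P) be a probability space, 𝒢 ⊆ 𝒢' ⊆ F sub-σ-algebras, E_a ∈ 𝒢' a measurable event, and ε > 0. Let Y : Ω → ℝ be 𝒢'-measurable and integrable, let π : Ω → ℝ be a correct propensity score, let m : Ω → ℝ be a correct outcome regression for Y, and let S : Ω → ℝ be a correct proxy reconstruction of Y. Then E[ (1_{E_a}/π)·(S − m) + m ] = E[m]; equivalently, setting ψ_a := E[m], the observed-data influence function φ_obs := (1_{E_a}/π)·(S − m) + m − ψ_a satisfies E[φ_obs] = 0. -/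
open MeasureTheory

private lemma indicator_one_integrable {Ω : Type*} {F : MeasurableSpace Ω} (P : MeasureTheory.Measure Ω)
    [MeasureTheory.IsFiniteMeasure P] {s : Set Ω} (hs : MeasurableSet s) :
    MeasureTheory.Integrable (s.indicator fun _ => (1 : ℝ)) P :=
  (MeasureTheory.integrable_const (1 : ℝ)).indicator hs

/-- Theorem 2: mean-zero property of the observed-data influence function.
If `π` is a correct propensity score, `m` a correct outcome regression for the hidden
outcome `Y`, and `S` a correct proxy reconstruction of `Y` (i.e. `E[S | 𝒢'] = Y` a.s.),
then `E[(1_{E_a}/π)·(S − m) + m] = E[m]`, i.e. the observed-data influence function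
`(1_{E_a}/π)·(S − m) + m − ψ_a` with `ψ_a = E[m]` has mean zero. -/
theorem observedData_influence_function_mean_zero
    {Ω : Type*} {F : MeasurableSpace Ω} (P : Measure Ω) [IsProbabilityMeasure P]
    (𝒢 𝒢' : MeasurableSpace Ω) (h𝒢 : 𝒢 ≤ 𝒢') (h𝒢' : 𝒢' ≤ F)
    (E_a : Set Ω) (hEa : MeasurableSet[𝒢'] E_a)
    (ε : ℝ) (hε : 0 < ε)
    (Y : Ω → ℝ) (hYmeas : StronglyMeasurable[𝒢'] Y) (hYint : Integrable Y P)
    (π : Ω → ℝ)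
    (hπmeas : StronglyMeasurable[𝒢] π)
    (hπlb : ∀ ω, ε ≤ π ω) (hπub : ∀ ω, π ω ≤ 1)
    (hπver : π =ᵐ[P] P[E_a.indicator (fun _ => (1 : ℝ)) | 𝒢])
    (m : Ω → ℝ)
    (hmmeas : StronglyMeasurable[𝒢] m)
    (hmint : Integrable m P)
    (hmreg : (fun ω => m ω * (P[E_a.indicator (fun _ => (1 : ℝ)) | 𝒢]) ω)
        =ᵐ[P] P[fun ω => Y ω * E_a.indicator (fun _ => (1 : ℝ)) ω | 𝒢])
    (S : Ω → ℝ) (hSint : Integrable S P)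
    (hSrec : P[S | 𝒢'] =ᵐ[P] Y) :
    ∫ ω, (E_a.indicator (fun _ => (1 : ℝ)) ω / π ω) * (S ω - m ω) + m ω ∂P
      = ∫ ω, m ω ∂P := by
  set ind : Ω → ℝ := E_a.indicator (fun _ => (1 : ℝ)) with hind_def
  have hπpos : ∀ ω, 0 < π ω := fun ω => lt_of_lt_of_le hε (hπlb ω)
  have hπne : ∀ ω, π ω ≠ 0 := fun ω => (hπpos ω).ne'
  -- measurability facts
  have hπF : StronglyMeasurable[F] π := hπmeas.mono (h𝒢'.trans' h𝒢)
  have hπinv𝒢 : StronglyMeasurable[𝒢] (fun ω => (π ω)⁻¹) :=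
    (hπmeas.measurable.inv).stronglyMeasurable
  have hπinvF : StronglyMeasurable[F] (fun ω => (π ω)⁻¹) := hπinv𝒢.mono (h𝒢'.trans' h𝒢)
  have hind𝒢' : StronglyMeasurable[𝒢'] ind :=
    (stronglyMeasurable_const.indicator hEa)
  have hindF : StronglyMeasurable[F] ind := hind𝒢'.mono h𝒢'
  have hind_bd : ∀ ω, ‖ind ω‖ ≤ 1 := by
    intro ω
    simp only [hind_def, Set.indicator]
    split_ifs <;> simp
  have hπinv_bd : ∀ ω, ‖(π ω)⁻¹‖ ≤ ε⁻¹ := by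
    intro ω
    rw [Real.norm_eq_abs, abs_of_pos (inv_pos.2 (hπpos ω))]
    exact inv_anti₀ hε (hπlb ω)
  -- integrability facts
  have hEaF : MeasurableSet[F] E_a := h𝒢' _ hEa
  have hind_int : Integrable ind P := indicator_one_integrable P hEaF
  have hg𝒢' : StronglyMeasurable[𝒢'] (fun ω => ind ω * (π ω)⁻¹) :=
    hind𝒢'.mul (hπinv𝒢.mono h𝒢)
  have hgF : StronglyMeasurable[F] (fun ω => ind ω * (π ω)⁻¹) := hg𝒢'.mono h𝒢'
  have hg_bd : ∀ ω, ‖ind ω * (π ω)⁻¹‖ ≤ ε⁻¹ := by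
    intro ω
    rw [norm_mul]
    calc ‖ind ω‖ * ‖(π ω)⁻¹‖ ≤ 1 * ε⁻¹ :=
          mul_le_mul (hind_bd ω) (hπinv_bd ω) (norm_nonneg _) zero_le_one
      _ = ε⁻¹ := one_mul _
  -- key claim: ∫ (ind/π) * h = ∫ m for h ∈ {S, m}
  -- Step A: ∫ (ind/π) * S = ∫ (ind/π) * Y
  have hgS_int : Integrable ((fun ω => ind ω * (π ω)⁻¹) * S) P :=
    hSint.bdd_mul hgF.aestronglyMeasurable (Filter.Eventually.of_forall hg_bd)
  have hA : ∫ ω, ind ω * (π ω)⁻¹ * S ω ∂P = ∫ ω, ind ω * (π ω)⁻¹ * Y ω ∂P := by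
    have h1 : P[(fun ω => ind ω * (π ω)⁻¹) * S | 𝒢']
        =ᵐ[P] (fun ω => ind ω * (π ω)⁻¹) * P[S | 𝒢'] :=
      condExp_mul_of_stronglyMeasurable_left hg𝒢' hgS_int hSint
    calc ∫ ω, ind ω * (π ω)⁻¹ * S ω ∂P
        = ∫ ω, (P[(fun ω => ind ω * (π ω)⁻¹) * S | 𝒢']) ω ∂P :=
          (integral_condExp h𝒢').symm
      _ = ∫ ω, ind ω * (π ω)⁻¹ * Y ω ∂P := by
          refine integral_congr_ae ?_
          filter_upwards [h1, hSrec] with ω h1 h2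
          rw [h1]
          simp only [Pi.mul_apply]
          rw [h2]
  -- Step B: ∫ (ind/π) * Y = ∫ m
  have hYind_int : Integrable (fun ω => Y ω * ind ω) P := by
    refine (hYint.bdd_mul hindF.aestronglyMeasurable
      (Filter.Eventually.of_forall hind_bd)).congr
      (Filter.Eventually.of_forall fun ω => ?_)
    simp [mul_comm]
  have hprodB_int : Integrable ((fun ω => (π ω)⁻¹) * fun ω => Y ω * ind ω) P :=
    hYind_int.bdd_mul hπinvF.aestronglyMeasurable (Filter.Eventually.of_forall hπinv_bd)
  have hB : ∫ ω, ind ω * (π ω)⁻¹ * Y ω ∂P = ∫ ω, m ω ∂P := by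
    have h1 : P[(fun ω => (π ω)⁻¹) * fun ω => Y ω * ind ω | 𝒢]
        =ᵐ[P] (fun ω => (π ω)⁻¹) * P[fun ω => Y ω * ind ω | 𝒢] :=
      condExp_mul_of_stronglyMeasurable_left hπinv𝒢 hprodB_int hYind_int
    calc ∫ ω, ind ω * (π ω)⁻¹ * Y ω ∂P
        = ∫ ω, ((fun ω => (π ω)⁻¹) * fun ω => Y ω * ind ω) ω ∂P := by
          refine integral_congr_ae (Filter.Eventually.of_forall fun ω => ?_)
          simp only [Pi.mul_apply]; ring
      _ = ∫ ω, (P[(fun ω => (π ω)⁻¹) * fun ω => Y ω * ind ω | 𝒢]) ω ∂P :=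
          (integral_condExp (h𝒢.trans h𝒢')).symm
      _ = ∫ ω, m ω ∂P := by
          refine integral_congr_ae ?_
          filter_upwards [h1, hmreg, hπver] with ω h1 h2 h3
          rw [h1]
          simp only [Pi.mul_apply]
          rw [← h2, ← h3]
          rw [mul_comm ((π ω)⁻¹), mul_assoc, mul_inv_cancel₀ (hπne ω), mul_one]
  -- Step C: ∫ (ind/π) * m = ∫ m
  have hπinvm𝒢 : StronglyMeasurable[𝒢] (fun ω => (π ω)⁻¹ * m ω) := hπinv𝒢.mul hmmeas
  have hπinvm_int : Integrable (fun ω => (π ω)⁻¹ * m ω) P :=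
    hmint.bdd_mul hπinvF.aestronglyMeasurable (Filter.Eventually.of_forall hπinv_bd)
  have hprodC_int : Integrable ((fun ω => (π ω)⁻¹ * m ω) * ind) P := by
    refine Integrable.bdd_mul hπinvm_int hindF.aestronglyMeasurable
      (Filter.Eventually.of_forall hind_bd) |>.congr ?_
    refine Filter.Eventually.of_forall fun ω => ?_
    simp [mul_comm]
  have hC : ∫ ω, ind ω * (π ω)⁻¹ * m ω ∂P = ∫ ω, m ω ∂P := by
    have h1 : P[(fun ω => (π ω)⁻¹ * m ω) * ind | 𝒢]
        =ᵐ[P] (fun ω => (π ω)⁻¹ * m ω) * P[ind | 𝒢] :=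
      condExp_mul_of_stronglyMeasurable_left hπinvm𝒢 hprodC_int hind_int
    calc ∫ ω, ind ω * (π ω)⁻¹ * m ω ∂P
        = ∫ ω, ((fun ω => (π ω)⁻¹ * m ω) * ind) ω ∂P := by
          refine integral_congr_ae (Filter.Eventually.of_forall fun ω => ?_)
          simp only [Pi.mul_apply]; ring
      _ = ∫ ω, (P[(fun ω => (π ω)⁻¹ * m ω) * ind | 𝒢]) ω ∂P :=
          (integral_condExp (h𝒢.trans h𝒢')).symm
      _ = ∫ ω, m ω ∂P := by
          refine integral_congr_ae ?_
          filter_upwards [h1, hπver] with ω h1 h3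
          rw [h1]
          simp only [Pi.mul_apply]
          rw [← h3]
          rw [mul_comm ((π ω)⁻¹) (m ω), mul_assoc, inv_mul_cancel₀ (hπne ω), mul_one]
  -- combine
  have hSm_int : Integrable (fun ω => S ω - m ω) P := hSint.sub hmint
  have hgSm_int : Integrable (fun ω => ind ω / π ω * (S ω - m ω)) P := by
    have := hSm_int.bdd_mul hgF.aestronglyMeasurable (Filter.Eventually.of_forall hg_bd)
    refine this.congr (Filter.Eventually.of_forall fun ω => ?_)
    simp [Pi.mul_apply, div_eq_mul_inv]
  rw [integral_add hgSm_int hmint]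
  have hgm_int : Integrable (fun ω => ind ω * (π ω)⁻¹ * m ω) P := by
    refine hprodC_int.congr (Filter.Eventually.of_forall fun ω => ?_)
    simp only [Pi.mul_apply]; ring
  have hgS_int' : Integrable (fun ω => ind ω * (π ω)⁻¹ * S ω) P := hgS_int
  have hsplit : ∫ ω, ind ω / π ω * (S ω - m ω) ∂P
      = (∫ ω, ind ω * (π ω)⁻¹ * S ω ∂P) - ∫ ω, ind ω * (π ω)⁻¹ * m ω ∂P := by
    rw [← integral_sub hgS_int' hgm_int]
    refine integral_congr_ae (Filter.Eventually.of_forall fun ω => ?_)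
    simp only [div_eq_mul_inv]; ring
  rw [hsplit, hA, hB, hC]
  ring
end

section
/- (Theorem 3, robustness cases (i)–(iii): correct propensity and correct proxy reconstruction, misspecified outcome regression.) Let (Ω, F, P) be a probability space, 𝒢 ⊆ 𝒢' ⊆ F sub-σ-algebras, E_a ∈ 𝒢' a measurable event, and ε > 0. Let Y : Ω → ℝ be 𝒢'-measurable and integrable, let π : Ω → ℝ be a correct propensity score, let m : Ω → ℝ be a correct outcome regression for Y, let S : Ω → ℝ be a correct proxy reconstruction of Y, and let m̂ : Ω → ℝ be ANY bounded 𝒢-measurable function. Then E[ (1_{E_a}/π)·(S − m̂) + m̂ ] = E[m] = ψ_a; that is, the estimating function remains unbiased for ψ_a even when the outcome regression is misspecified. -/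
open MeasureTheory

/-- Helper: for a bounded `G`-measurable `g` and integrable `h`,
`∫ g·h = ∫ g·E[h|G]`. -/
lemma integral_mul_eq_integral_mul_condexp
    {Ω : Type*} {F : MeasurableSpace Ω} (P : Measure Ω) [IsProbabilityMeasure P]
    (G : MeasurableSpace Ω) (hG : G ≤ F) (g h : Ω → ℝ)
    (hg : StronglyMeasurable[G] g) (C : ℝ) (hgb : ∀ ω, |g ω| ≤ C)
    (hh : Integrable h P) :
    ∫ ω, g ω * h ω ∂P = ∫ ω, g ω * (P[h|G]) ω ∂P := by
  have h1 : P[fun ω => g ω * h ω|G] =ᵐ[P] fun ω => g ω * (P[h|G]) ω := by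
    have := condExp_stronglyMeasurable_mul_of_bound hG hg hh C
      (Filter.Eventually.of_forall fun ω => by simpa [Real.norm_eq_abs] using hgb ω)
    exact this
  calc ∫ ω, g ω * h ω ∂P = ∫ ω, (P[fun ω => g ω * h ω|G]) ω ∂P :=
        (integral_condExp hG).symm
    _ = ∫ ω, g ω * (P[h|G]) ω ∂P := integral_congr_ae h1

/-- Theorem 3, cases (i)–(iii): with a correct propensity score `π` and a
correct proxy reconstruction `S` of the hidden outcome `Y`, the estimating function
remains unbiased for `ψ_a = E[m]` even when the outcome regression is replaced by ANY
bounded 𝒢-measurable function `m̂`: `E[(1_{E_a}/π)·(S − m̂) + m̂] = E[m]`. -/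
theorem observedData_influence_function_robust_outcome_regression
    {Ω : Type*} {F : MeasurableSpace Ω} (P : Measure Ω) [IsProbabilityMeasure P]
    (𝒢 𝒢' : MeasurableSpace Ω) (h𝒢 : 𝒢 ≤ 𝒢') (h𝒢' : 𝒢' ≤ F)
    (E_a : Set Ω) (hEa : MeasurableSet[𝒢'] E_a)
    (ε : ℝ) (hε : 0 < ε)
    (Y : Ω → ℝ) (hYmeas : StronglyMeasurable[𝒢'] Y) (hYint : Integrable Y P)
    (π : Ω → ℝ)
    (hπmeas : StronglyMeasurable[𝒢] π)
    (hπlb : ∀ ω, ε ≤ π ω) (hπub : ∀ ω, π ω ≤ 1)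
    (hπver : π =ᵐ[P] P[E_a.indicator (fun _ => (1 : ℝ)) | 𝒢])
    (m : Ω → ℝ)
    (hmmeas : StronglyMeasurable[𝒢] m)
    (hmint : Integrable m P)
    (hmreg : (fun ω => m ω * (P[E_a.indicator (fun _ => (1 : ℝ)) | 𝒢]) ω)
        =ᵐ[P] P[fun ω => Y ω * E_a.indicator (fun _ => (1 : ℝ)) ω | 𝒢])
    (S : Ω → ℝ) (hSint : Integrable S P)
    (hSrec : P[S | 𝒢'] =ᵐ[P] Y)
    (mhat : Ω → ℝ)
    (hmhatmeas : StronglyMeasurable[𝒢] mhat)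
    (hmhatbdd : ∃ C : ℝ, ∀ ω, |mhat ω| ≤ C) :
    ∫ ω, (E_a.indicator (fun _ => (1 : ℝ)) ω / π ω) * (S ω - mhat ω) + mhat ω ∂P
      = ∫ ω, m ω ∂P := by
  set I : Ω → ℝ := E_a.indicator (fun _ => (1 : ℝ)) with hI
  have h𝒢F : 𝒢 ≤ F := h𝒢.trans h𝒢'
  obtain ⟨C₀, hC₀⟩ := hmhatbdd
  set C : ℝ := max C₀ 0 with hC
  have hCmhat : ∀ ω, |mhat ω| ≤ C := fun ω => (hC₀ ω).trans (le_max_left _ _)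
  have hCnn : (0 : ℝ) ≤ C := le_max_right _ _
  have hπpos : ∀ ω, 0 < π ω := fun ω => hε.trans_le (hπlb ω)
  have hπne : ∀ ω, π ω ≠ 0 := fun ω => (hπpos ω).ne'
  have hImeas : StronglyMeasurable[𝒢'] I :=
    StronglyMeasurable.indicator stronglyMeasurable_const hEa
  have hIbd : ∀ ω, |I ω| ≤ 1 := by
    intro ω
    by_cases h : ω ∈ E_a <;> simp [hI, Set.indicator_apply, h]
  -- basic measurability over F
  have hπF : @AEStronglyMeasurable Ω ℝ _ F F π P := (hπmeas.mono h𝒢F).aestronglyMeasurable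
  have hIF : @AEStronglyMeasurable Ω ℝ _ F F I P := (hImeas.mono h𝒢').aestronglyMeasurable
  have hmhatF : @AEStronglyMeasurable Ω ℝ _ F F mhat P := (hmhatmeas.mono h𝒢F).aestronglyMeasurable
  -- boundedness of I/π and mhat/π
  have hIπbd : ∀ ω, |I ω / π ω| ≤ 1 / ε := by
    intro ω
    rw [abs_div, abs_of_pos (hπpos ω)]
    exact div_le_div₀ (by norm_num) (hIbd ω) hε (hπlb ω)
  have hmπbd : ∀ ω, |mhat ω / π ω| ≤ C / ε := by
    intro ω
    rw [abs_div, abs_of_pos (hπpos ω)]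
    exact div_le_div₀ hCnn (hCmhat ω) hε (hπlb ω)
  have h1πbd : ∀ ω, |1 / π ω| ≤ 1 / ε := by
    intro ω
    rw [abs_div, abs_of_pos (hπpos ω), abs_one]
    exact div_le_div₀ (by norm_num) le_rfl hε (hπlb ω)
  -- integrability facts
  have hmhatint : Integrable mhat P :=
    ⟨hmhatF, HasFiniteIntegral.of_bounded (C := C)
      (Filter.Eventually.of_forall fun ω => by simpa [Real.norm_eq_abs] using hCmhat ω)⟩
  have hIint : Integrable I P :=
    ⟨hIF, HasFiniteIntegral.of_bounded (C := 1)
      (Filter.Eventually.of_forall fun ω => by simpa [Real.norm_eq_abs] using hIbd ω)⟩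
  have hIπmeasF : @AEStronglyMeasurable Ω ℝ _ F F (fun ω => I ω / π ω) P :=
    (((hImeas.mono h𝒢').measurable.div (hπmeas.mono h𝒢F).measurable).stronglyMeasurable).aestronglyMeasurable
  have hmπmeasF : @AEStronglyMeasurable Ω ℝ _ F F (fun ω => mhat ω / π ω) P :=
    (((hmhatmeas.mono h𝒢F).measurable.div (hπmeas.mono h𝒢F).measurable).stronglyMeasurable).aestronglyMeasurable
  have hT1 : Integrable (fun ω => I ω / π ω * S ω) P :=
    hSint.bdd_mul hIπmeasF
      (c := 1 / ε) (Filter.Eventually.of_forall fun ω => by rw [Real.norm_eq_abs]; exact hIπbd ω)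
  have hT2 : Integrable (fun ω => mhat ω / π ω * I ω) P :=
    hIint.bdd_mul hmπmeasF
      (c := C / ε) (Filter.Eventually.of_forall fun ω => by rw [Real.norm_eq_abs]; exact hmπbd ω)
  have hYI : Integrable (fun ω => Y ω * I ω) P := by
    have := hYint.bdd_mul hIF (c := 1) (Filter.Eventually.of_forall fun ω => by rw [Real.norm_eq_abs]; exact hIbd ω)
    exact this.congr (Filter.Eventually.of_forall fun ω => mul_comm _ _)
  -- Step A : ∫ (I/π)·S = ∫ (I/π)·Y
  have stepA : ∫ ω, I ω / π ω * S ω ∂P = ∫ ω, I ω / π ω * Y ω ∂P := by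
    rw [integral_mul_eq_integral_mul_condexp P 𝒢' h𝒢' (fun ω => I ω / π ω) S
      ((hImeas.measurable.div (hπmeas.mono h𝒢).measurable).stronglyMeasurable) (1 / ε) hIπbd hSint]
    refine integral_congr_ae ?_
    filter_upwards [hSrec] with ω hω
    rw [hω]
  -- Step B : ∫ (I/π)·Y = ∫ m
  have stepB : ∫ ω, I ω / π ω * Y ω ∂P = ∫ ω, m ω ∂P := by
    have e1 : ∫ ω, I ω / π ω * Y ω ∂P = ∫ ω, (1 / π ω) * (Y ω * I ω) ∂P := by
      apply integral_congr_ae; filter_upwards with ω; ring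
    rw [e1, integral_mul_eq_integral_mul_condexp P 𝒢 h𝒢F (fun ω => 1 / π ω)
      (fun ω => Y ω * I ω) ((measurable_const.div hπmeas.measurable).stronglyMeasurable) (1 / ε) h1πbd hYI]
    apply integral_congr_ae
    filter_upwards [hmreg, hπver] with ω h₁ h₂
    rw [← h₁, ← h₂, one_div, inv_mul_eq_div, mul_div_assoc, div_self (hπne ω), mul_one]
  -- Step C : ∫ (mhat/π)·I = ∫ mhat
  have stepC : ∫ ω, mhat ω / π ω * I ω ∂P = ∫ ω, mhat ω ∂P := by
    rw [integral_mul_eq_integral_mul_condexp P 𝒢 h𝒢F (fun ω => mhat ω / π ω) I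
      ((hmhatmeas.measurable.div hπmeas.measurable).stronglyMeasurable) (C / ε) hmπbd hIint]
    apply integral_congr_ae
    filter_upwards [hπver] with ω h₂
    rw [← h₂, div_mul_eq_mul_div, mul_div_assoc, div_self (hπne ω), mul_one]
  -- combine
  have split : ∫ ω, (I ω / π ω) * (S ω - mhat ω) + mhat ω ∂P
      = ∫ ω, I ω / π ω * S ω ∂P - ∫ ω, mhat ω / π ω * I ω ∂P + ∫ ω, mhat ω ∂P := by
    have hsub : Integrable (fun ω => I ω / π ω * S ω - mhat ω / π ω * I ω) P :=
      hT1.sub hT2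
    rw [show (∫ ω, (I ω / π ω) * (S ω - mhat ω) + mhat ω ∂P)
        = ∫ ω, (I ω / π ω * S ω - mhat ω / π ω * I ω) + mhat ω ∂P from
      integral_congr_ae (Filter.Eventually.of_forall fun ω => by ring),
      integral_add hsub hmhatint, integral_sub hT1 hT2]
  rw [split, stepA, stepB, stepC]
  ring
end

section
/- (Pathwise derivative property of the full-data influence function, Equation (2), finite-support case.) Let 𝒜, 𝒴, 𝒞 be finite nonempty types, v : 𝒴 → ℝ, and fix a ∈ 𝒜. Let p : 𝒜 × 𝒴 × 𝒞 → ℝ be strictly positive with Σ_h p(h) = 1, and let s : 𝒜 × 𝒴 × 𝒞 → ℝ satisfy Σ_h p(h)·s(h) = 0. For ε ∈ ℝ set p_ε(h) = p(h)·(1 + ε·s(h)), and define q_ε(c) = Σ_{a',y} p_ε(a',y,c), n_ε(c) = Σ_y p_ε(a,y,c), and ψ(ε) = Σ_c q_ε(c) · (Σ_y v(y)·p_ε(a,y,c)) / n_ε(c). Define π(c) = n_0(c)/q_0(c), m(c) = (Σ_y v(y)·p(a,y,c))/n_0(c), ψ_a = ψ(0), and φ(a',y,c) = (1{a' = a}/π(c))·(v(y)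 − m(c)) + m(c) − ψ_a. Then ψ is differentiable at ε = 0 with derivative ψ'(0) = Σ_{(a',y,c)} p(a',y,c)·φ(a',y,c)·s(a',y,c). -/
open Finset

/-- pathwise derivative property of the full-data influence function
(Equation (2)) in the finite-support case: along the parametric submodel
`p_ε(h) = p(h)·(1 + ε·s(h))` with score `s`, the confounding adjustment functional
`ψ(ε)` is differentiable at `ε = 0` with derivative `E[φ·s]`, where `φ` is the
full-data influence function. -/
theorem fullData_influence_function_pathwise_derivative
    {𝒜 𝒴 𝒞 : Type*} [Fintype 𝒜] [Fintype 𝒴] [Fintype 𝒞]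
    [Nonempty 𝒜] [Nonempty 𝒴] [Nonempty 𝒞] [DecidableEq 𝒜]
    (v : 𝒴 → ℝ) (a : 𝒜)
    (p s : 𝒜 × 𝒴 × 𝒞 → ℝ)
    (hp : ∀ h, 0 < p h)
    (hpsum : ∑ h, p h = 1)
    (hscore : ∑ h, p h * s h = 0)
    (pe : ℝ → 𝒜 × 𝒴 × 𝒞 → ℝ)
    (hpe : ∀ ε h, pe ε h = p h * (1 + ε * s h))
    (q n : ℝ → 𝒞 → ℝ)
    (hq : ∀ ε c, q ε c = ∑ a', ∑ y, pe ε (a', y, c))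
    (hn : ∀ ε c, n ε c = ∑ y, pe ε (a, y, c))
    (ψ : ℝ → ℝ)
    (hψ : ∀ ε, ψ ε = ∑ c, q ε c * ((∑ y, v y * pe ε (a, y, c)) / n ε c))
    (π m : 𝒞 → ℝ)
    (hπ : ∀ c, π c = n 0 c / q 0 c)
    (hm : ∀ c, m c = (∑ y, v y * pe 0 (a, y, c)) / n 0 c)
    (ψa : ℝ) (hψa : ψa = ψ 0)
    (φ : 𝒜 × 𝒴 × 𝒞 → ℝ)
    (hφ : ∀ a' y c,
      φ (a', y, c) = (if a' = a then (1 : ℝ) else 0) / π c * (v y - m c) + m c - ψa) :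
    HasDerivAt ψ (∑ h, p h * φ h * s h) 0 := by
  classical
  -- abbreviations
  set Q : 𝒞 → ℝ := fun c => ∑ a', ∑ y, p (a', y, c) with hQdef
  set Q' : 𝒞 → ℝ := fun c => ∑ a', ∑ y, p (a', y, c) * s (a', y, c) with hQ'def
  set N : 𝒞 → ℝ := fun c => ∑ y, p (a, y, c) with hNdef
  set N' : 𝒞 → ℝ := fun c => ∑ y, p (a, y, c) * s (a, y, c) with hN'def
  set G : 𝒞 → ℝ := fun c => ∑ y, v y * p (a, y, c) with hGdef
  set G' : 𝒞 → ℝ := fun c => ∑ y, v y * p (a, y, c) * s (a, y, c) with hG'def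
  have hNpos : ∀ c, 0 < N c := fun c =>
    Finset.sum_pos (fun y _ => hp (a, y, c)) Finset.univ_nonempty
  have hQpos : ∀ c, 0 < Q c := fun c =>
    Finset.sum_pos (fun a' _ => Finset.sum_pos (fun y _ => hp (a', y, c)) Finset.univ_nonempty)
      Finset.univ_nonempty
  -- affine expressions for q, n, G along the path
  have hqe : ∀ ε c, q ε c = Q c + ε * Q' c := by
    intro ε c
    rw [hq]
    simp only [hpe, hQdef, hQ'def, Finset.mul_sum]
    rw [← Finset.sum_add_distrib]
    refine Finset.sum_congr rfl fun a' _ => ?_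
    rw [← Finset.sum_add_distrib]
    refine Finset.sum_congr rfl fun y _ => ?_
    ring
  have hne : ∀ ε c, n ε c = N c + ε * N' c := by
    intro ε c
    rw [hn]
    simp only [hpe, hNdef, hN'def, Finset.mul_sum]
    rw [← Finset.sum_add_distrib]
    refine Finset.sum_congr rfl fun y _ => ?_
    ring
  have hge : ∀ ε c, (∑ y, v y * pe ε (a, y, c)) = G c + ε * G' c := by
    intro ε c
    simp only [hpe, hGdef, hG'def, Finset.mul_sum]
    rw [← Finset.sum_add_distrib]
    refine Finset.sum_congr rfl fun y _ => ?_
    ring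
  have hψe : ψ = fun ε => ∑ c, (Q c + ε * Q' c) * ((G c + ε * G' c) / (N c + ε * N' c)) := by
    funext ε
    rw [hψ]
    refine Finset.sum_congr rfl fun c _ => ?_
    rw [hqe, hne, hge]
  -- derivative of each summand
  have hD : ∀ c : 𝒞, HasDerivAt
      (fun ε => (Q c + ε * Q' c) * ((G c + ε * G' c) / (N c + ε * N' c)))
      (Q' c * (G c / N c) + Q c * ((G' c * N c - G c * N' c) / N c ^ 2)) 0 := by
    intro c
    have h1 : HasDerivAt (fun ε : ℝ => Q c + ε * Q' c) (Q' c) 0 := by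
      simpa using ((hasDerivAt_id (0 : ℝ)).mul_const (Q' c)).const_add (Q c)
    have h2 : HasDerivAt (fun ε : ℝ => G c + ε * G' c) (G' c) 0 := by
      simpa using ((hasDerivAt_id (0 : ℝ)).mul_const (G' c)).const_add (G c)
    have h3 : HasDerivAt (fun ε : ℝ => N c + ε * N' c) (N' c) 0 := by
      simpa using ((hasDerivAt_id (0 : ℝ)).mul_const (N' c)).const_add (N c)
    have hne0 : N c + 0 * N' c ≠ 0 := by simpa using (hNpos c).ne'
    have hdiv := h2.fun_div h3 hne0
    have := h1.fun_mul hdiv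
    simpa using this
  have hsum := HasDerivAt.fun_sum (fun c (_ : c ∈ Finset.univ) => hD c)
  rw [hψe]
  refine hsum.congr_deriv (Eq.symm ?_)
  -- now prove the derivative identity
  have hpe0 : ∀ h, pe 0 h = p h := by intro h; rw [hpe]; ring
  have hn0 : ∀ c, n 0 c = N c := by intro c; rw [hne]; ring
  have hq0 : ∀ c, q 0 c = Q c := by intro c; rw [hqe]; ring
  have hm' : ∀ c, m c = G c / N c := by
    intro c; rw [hm, hn0, hGdef]
    simp only [hpe0]
  have hπ' : ∀ c, π c = N c / Q c := by
    intro c; rw [hπ, hn0, hq0]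
  -- expand φ and use the score condition
  have expand : ∀ h : 𝒜 × 𝒴 × 𝒞, p h * φ h * s h =
      (p h * s h) * ((if h.1 = a then (1:ℝ) else 0) / π h.2.2 * (v h.2.1 - m h.2.2)
        + m h.2.2) - ψa * (p h * s h) := by
    rintro ⟨a', y, c⟩
    rw [hφ]
    ring
  have step1 : ∑ h, p h * φ h * s h =
      ∑ h : 𝒜 × 𝒴 × 𝒞, (p h * s h) * ((if h.1 = a then (1:ℝ) else 0) / π h.2.2
        * (v h.2.1 - m h.2.2) + m h.2.2) := by
    simp only [expand]
    rw [Finset.sum_sub_distrib, ← Finset.mul_sum, hscore, mul_zero, sub_zero]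
  rw [step1]
  -- reorganize the triple sum with c outermost
  rw [Fintype.sum_prod_type]
  have swap : ∀ a' : 𝒜, (∑ yc : 𝒴 × 𝒞, (p (a', yc.1, yc.2) * s (a', yc.1, yc.2)) *
      ((if a' = a then (1:ℝ) else 0) / π yc.2 * (v yc.1 - m yc.2) + m yc.2)) =
      ∑ c, ∑ y, (p (a', y, c) * s (a', y, c)) *
      ((if a' = a then (1:ℝ) else 0) / π c * (v y - m c) + m c) := by
    intro a'
    rw [Fintype.sum_prod_type]
    rw [Finset.sum_comm]
  simp only [swap]
  rw [Finset.sum_comm]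
  refine Finset.sum_congr rfl fun c _ => ?_
  -- per-c identity
  have hNne : N c ≠ 0 := (hNpos c).ne'
  have hQne : Q c ≠ 0 := (hQpos c).ne'
  have lhs_eq : (∑ a', ∑ y, (p (a', y, c) * s (a', y, c)) *
      ((if a' = a then (1:ℝ) else 0) / π c * (v y - m c) + m c)) =
      (Q c / N c) * (G' c - m c * N' c) + m c * Q' c := by
    have split : ∀ a' y, (p (a', y, c) * s (a', y, c)) *
        ((if a' = a then (1:ℝ) else 0) / π c * (v y - m c) + m c) =
        (if a' = a then (Q c / N c) * (p (a', y, c) * s (a', y, c) * (v y - m c)) else 0)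
        + m c * (p (a', y, c) * s (a', y, c)) := by
      intro a' y
      by_cases h : a' = a
      · rw [if_pos h, if_pos h, hπ' c, one_div_div]
        ring
      · rw [if_neg h, if_neg h]
        ring
    simp only [split, Finset.sum_add_distrib]
    congr 1
    · rw [Finset.sum_comm]
      simp only [Finset.sum_ite_eq', Finset.mem_univ, if_true]
      rw [← Finset.mul_sum]
      congr 1
      simp only [hG'def, hN'def, mul_sub, Finset.sum_sub_distrib, Finset.mul_sum]
      congr 1
      · exact Finset.sum_congr rfl fun y _ => by ring
      · exact Finset.sum_congr rfl fun y _ => by ring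
    · simp only [← Finset.mul_sum, hQ'def]
  rw [lhs_eq, hm' c]
  field_simp
  ring
end
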